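/- arXiv:1904.07584 — 3 statements merged into one kernel-verified Lean document; each statement's English description precedes it below -/
import Mathlib

section
/- Let d ≥ 1, and suppose vectors a(d+1),…,a(n) ∈ ℚ^d each lie in the open positive orthant (all coordinates > 0). Fix y' = (y_{d+1},…,y_{n-1}) ∈ ℂ^{n-d-1}, β ∈ ℂ^d with Re(β_k) < 0 for all k, m ∈ ℕ, and a(n) with all coordinates positive. Then the function t ↦ |t^{-β-𝟙+m·a(n)}| · |exp(t_1+⋯+t_d + ∑_{j=d+1}^{n-1} y_j t^{a(j)})|, restricted to the product of half-lines arg t_k = (1+δ_k+2p_k)π (with |δ_k|<1/2) and parametrized by |t_k| = ρ_k ∈ (0,∞), is dominated by a function of the form Const · ρ^{-Re β + m a(n) - 𝟙} exp(C - c(ρ_1+⋯+ρ_d)) for some constants C, c > 0, and hence is integrable over (0,∞)^d. -/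
/-!
On the half-lines put `θ_k = π (1 + δ_k + 2 p_k)`, so that `|t^c| = ρ^{Re c} e^{-Σ θ_k Im c_k}` and
`Re t_k = ρ_k cos θ_k = -ρ_k cos (π δ_k) ≤ -c ρ_k` for some `c > 0`, because `|δ_k| < 1/2`.
Each `|y_j t^{a(j)}| = |y_j| ρ^{a(j)}` is at most `|y_j| (ρ_1 + ⋯ + ρ_d)^{|a(j)|}`, which is
sublinear since `|a(j)| < 1`, hence absorbed into `C + (c/2)(ρ_1 + ⋯ + ρ_d)`. The resulting bound
factors into the one-variable Gamma integrands `ρ_k^{e_k} e^{-c ρ_k / 2}`, integrable on `(0, ∞)`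
because `e_k = -Re β_k + m a(n)_k - 1 > -1`.
-/

open MeasureTheory

/-- The absolute value of the integrand of the coefficient `A_{p,δ}(β;m,y')`, along the
product of half-lines `arg t_k = (1+δ_k+2p_k)π` parametrized by `ρ ∈ (0,∞)^d`. -/
noncomputable def gevreyCoeffIntegrand (d n : ℕ) (a : ℕ → Fin d → ℚ) (y : ℕ → ℂ)
    (β : Fin d → ℂ) (m : ℕ) (p : Fin d → ℤ) (δ : Fin d → ℝ) (ρ : Fin d → ℝ) : ℝ :=
  ‖Complex.exp (∑ k, (-β k - 1 + (m : ℂ) * (a n k : ℂ)) *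
      ((Real.log (ρ k) : ℂ) + (Real.pi : ℂ) * (1 + (δ k : ℂ) + 2 * (p k : ℂ)) * Complex.I))‖ *
  ‖Complex.exp ((∑ k, Complex.exp ((Real.log (ρ k) : ℂ) +
        (Real.pi : ℂ) * (1 + (δ k : ℂ) + 2 * (p k : ℂ)) * Complex.I)) +
      ∑ j ∈ Finset.Icc (d + 1) (n - 1), y j *
        Complex.exp (∑ k, (a j k : ℂ) *
          ((Real.log (ρ k) : ℂ) + (Real.pi : ℂ) * (1 + (δ k : ℂ) + 2 * (p k : ℂ)) * Complex.I)))‖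

open Real Set Filter Topology

lemma rpow_le_rpow_add_rpow_sub_one_mul {s M x : ℝ} (hs0 : 0 ≤ s) (hs1 : s ≤ 1) (hM : 0 < M)
    (hx : 0 ≤ x) : x ^ s ≤ M ^ s + M ^ (s - 1) * x := by
  rcases le_total x M with h | h
  · have : x ^ s ≤ M ^ s := rpow_le_rpow hx h hs0
    nlinarith [rpow_nonneg hM.le (s - 1), rpow_nonneg hM.le s]
  · have hx0 : 0 < x := hM.trans_le h
    calc x ^ s = x ^ (s - 1) * x := by rw [← rpow_add_one hx0.ne', sub_add_cancel]
      _ ≤ M ^ (s - 1) * x :=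
        mul_le_mul_of_nonneg_right (rpow_le_rpow_of_nonpos hM h (by linarith)) hx
      _ ≤ M ^ s + M ^ (s - 1) * x := le_add_of_nonneg_left (rpow_nonneg hM.le s)

lemma exists_sum_mul_rpow_le_add_mul {ι : Type*} (t : Finset ι) (b s : ι → ℝ)
    (hb : ∀ j ∈ t, 0 ≤ b j) (hs : ∀ j ∈ t, 0 ≤ s j ∧ s j < 1) {ε : ℝ} (hε : 0 < ε) :
    ∃ C, ∀ x, 0 ≤ x → ∑ j ∈ t, b j * x ^ s j ≤ C + ε * x := by
  have htend : Tendsto (fun M : ℝ => ∑ j ∈ t, b j * M ^ (s j - 1)) atTop (𝓝 0) := by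
    rw [← Finset.sum_const_zero (s := t)]
    refine tendsto_finsetSum _ fun j hj => ?_
    simpa using (tendsto_rpow_neg_atTop (by linarith [(hs j hj).2] : 0 < 1 - s j)).const_mul (b j)
  obtain ⟨M, hM, hMε⟩ := ((eventually_gt_atTop 0).and (htend.eventually_le_const hε)).exists
  refine ⟨∑ j ∈ t, b j * M ^ s j, fun x hx => ?_⟩
  calc ∑ j ∈ t, b j * x ^ s j ≤ ∑ j ∈ t, b j * (M ^ s j + M ^ (s j - 1) * x) :=
        Finset.sum_le_sum fun j hj => mul_le_mul_of_nonneg_left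
          (rpow_le_rpow_add_rpow_sub_one_mul (hs j hj).1 (hs j hj).2.le hM hx) (hb j hj)
    _ = ∑ j ∈ t, b j * M ^ s j + (∑ j ∈ t, b j * M ^ (s j - 1)) * x := by
        rw [Finset.sum_mul, ← Finset.sum_add_distrib]; exact Finset.sum_congr rfl fun j _ => by ring
    _ ≤ ∑ j ∈ t, b j * M ^ s j + ε * x := by gcongr

lemma prod_rpow_le_rpow_sum {ι : Type*} [Fintype ι] (ρ a : ι → ℝ) (hρ : ∀ k, 0 ≤ ρ k)
    (ha : ∀ k, 0 ≤ a k) : ∏ k, ρ k ^ a k ≤ (∑ k, ρ k) ^ ∑ k, a k := by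
  rw [rpow_sum_of_nonneg (Finset.sum_nonneg fun k _ => hρ k) fun k _ => ha k]
  exact Finset.prod_le_prod (fun k _ => rpow_nonneg (hρ k) _) fun k _ =>
    rpow_le_rpow (hρ k) (Finset.single_le_sum (fun i _ => hρ i) (Finset.mem_univ k)) (ha k)

lemma exists_pos_forall_le {ι : Type*} [Finite ι] {f : ι → ℝ} (hf : ∀ k, 0 < f k) :
    ∃ c, 0 < c ∧ ∀ k, c ≤ f k :=
  ((eventually_mem_nhdsWithin (a := (0 : ℝ)) (s := Ioi 0)).and (eventually_all.2 fun k =>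
    nhdsWithin_le_nhds (eventually_le_nhds (hf k)))).exists

lemma integrableOn_prod_rpow_mul_exp_neg_mul {ι : Type*} [Fintype ι] {e : ι → ℝ}
    (he : ∀ k, -1 < e k) {c : ℝ} (hc : 0 < c) :
    IntegrableOn (fun ρ : ι → ℝ => ∏ k, (ρ k ^ e k * rexp (-c * ρ k)))
      (univ.pi fun _ => Ioi 0) := by
  rw [IntegrableOn, volume_pi, Measure.restrict_pi_pi]
  refine Integrable.fintype_prod (f := fun k x => x ^ e k * rexp (-c * x)) fun k => ?_
  simpa [IntegrableOn] using integrableOn_rpow_mul_exp_neg_mul_rpow (he k) zero_lt_one hc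

lemma integrableOn_of_norm_le_prod_rpow_mul_exp {ι : Type*} [Fintype ι] {f : (ι → ℝ) → ℝ}
    (hf : AEStronglyMeasurable f (volume.restrict {ρ | ∀ k, 0 < ρ k})) {e : ι → ℝ}
    (he : ∀ k, -1 < e k) {K C c : ℝ} (hc : 0 < c)
    (hle : ∀ ρ : ι → ℝ, (∀ k, 0 < ρ k) →
      ‖f ρ‖ ≤ K * (∏ k, ρ k ^ e k) * rexp (C - c * ∑ k, ρ k)) :
    IntegrableOn f {ρ | ∀ k, 0 < ρ k} := by
  have horthant : {ρ : ι → ℝ | ∀ k, 0 < ρ k} = univ.pi fun _ => Ioi 0 := by ext; simp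
  have hdom := (integrableOn_prod_rpow_mul_exp_neg_mul he hc).const_mul (K * rexp C)
  rw [← horthant] at hdom
  refine hdom.mono' hf (ae_restrict_of_forall_mem (horthant ▸ MeasurableSet.univ_pi
    fun _ => measurableSet_Ioi) fun ρ hρ => (hle ρ hρ).trans_eq ?_)
  rw [Finset.prod_mul_distrib, ← exp_sum, sub_eq_add_neg, exp_add, Finset.mul_sum,
    ← Finset.sum_neg_distrib]
  simp only [neg_mul]
  ring

lemma norm_cexp_sum_mul {ι : Type*} [Fintype ι] (c z : ι → ℂ) {ρ : ι → ℝ}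
    (hρ : ∀ k, 0 < ρ k) (hz : ∀ k, (z k).re = Real.log (ρ k)) :
    ‖Complex.exp (∑ k, c k * z k)‖ = (∏ k, ρ k ^ (c k).re) * rexp (-∑ k, (c k).im * (z k).im) := by
  simp only [Complex.norm_exp, Complex.re_sum, Complex.mul_re, hz, sub_eq_add_neg, exp_add,
    exp_sum]
  rw [← Finset.sum_neg_distrib, exp_sum, ← Finset.prod_mul_distrib]
  exact Finset.prod_congr rfl fun k _ => by rw [rpow_def_of_pos (hρ k), mul_comm (log _)]

lemma cos_pi_mul_one_add_add_two_mul_intCast (x : ℝ) (q : ℤ) :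
    cos (π * (1 + x + 2 * q)) = -cos (π * x) := by
  rw [show π * (1 + x + 2 * q) = π - -(π * x) + q * (2 * π) by ring, cos_add_int_mul_two_pi,
    cos_pi_sub, cos_neg]

lemma gevreyCoeffIntegrand_le {d n : ℕ} {a : ℕ → Fin d → ℚ}
    (ha : ∀ j ∈ Finset.Icc (d + 1) (n - 1), ∀ k, 0 ≤ a j k) (y : ℕ → ℂ) (β : Fin d → ℂ) (m : ℕ)
    (p : Fin d → ℤ) (δ : Fin d → ℝ) {ρ : Fin d → ℝ} (hρ : ∀ k, 0 < ρ k) :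
    gevreyCoeffIntegrand d n a y β m p δ ρ ≤
      rexp (∑ k, (β k).im * (π * (1 + δ k + 2 * p k))) *
        (∏ k, ρ k ^ (-(β k).re + (m : ℝ) * (a n k : ℝ) - 1)) *
        rexp (-∑ k, ρ k * cos (π * δ k) +
          ∑ j ∈ Finset.Icc (d + 1) (n - 1), ‖y j‖ * (∑ k, ρ k) ^ ((∑ k, a j k : ℚ) : ℝ)) := by
  unfold gevreyCoeffIntegrand
  set z : Fin d → ℂ := fun k =>
    (Real.log (ρ k) : ℂ) + (Real.pi : ℂ) * (1 + (δ k : ℂ) + 2 * (p k : ℂ)) * Complex.I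
  have hre : ∀ k, (z k).re = Real.log (ρ k) := fun k => by simp [z]
  have him : ∀ k, (z k).im = π * (1 + δ k + 2 * p k) := fun k => by simp [z]
  have hfirst : ‖Complex.exp (∑ k, (-β k - 1 + (m : ℂ) * (a n k : ℂ)) * z k)‖ =
      rexp (∑ k, (β k).im * (π * (1 + δ k + 2 * p k))) *
        ∏ k, ρ k ^ (-(β k).re + (m : ℝ) * (a n k : ℝ) - 1) := by
    rw [norm_cexp_sum_mul _ _ hρ hre, mul_comm]
    congr 1
    · simp [him]
    · exact Finset.prod_congr rfl fun k _ => by simp; ring_nf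
  have hcos : ∑ k, (Complex.exp (z k)).re = -∑ k, ρ k * cos (π * δ k) := by
    simp only [Complex.exp_re, hre, him, exp_log (hρ _), cos_pi_mul_one_add_add_two_mul_intCast,
      mul_neg, Finset.sum_neg_distrib]
  have hpow : ∀ j ∈ Finset.Icc (d + 1) (n - 1),
      ‖y j * Complex.exp (∑ k, (a j k : ℂ) * z k)‖ ≤
        ‖y j‖ * (∑ k, ρ k) ^ ((∑ k, a j k : ℚ) : ℝ) := by
    intro j hj
    rw [norm_mul, norm_cexp_sum_mul _ _ hρ hre]
    simp only [Complex.ratCast_re, Complex.ratCast_im, zero_mul, Finset.sum_const_zero, neg_zero,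
      exp_zero, mul_one, Rat.cast_sum]
    gcongr
    exact prod_rpow_le_rpow_sum _ _ (fun k => (hρ k).le) fun k => by exact_mod_cast ha j hj k
  rw [hfirst, Complex.norm_exp, Complex.add_re, Complex.re_sum, hcos]
  refine mul_le_mul_of_nonneg_left (exp_le_exp.2 (add_le_add_right ?_ _))
    (mul_nonneg (exp_pos _).le (Finset.prod_nonneg fun k _ => rpow_nonneg (hρ k).le _))
  exact (Complex.re_le_norm _).trans ((norm_sum_le _ _).trans (Finset.sum_le_sum hpow))

lemma gevreyCoeffIntegrand_le_exp_sub {d n : ℕ} {a : ℕ → Fin d → ℚ}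
    (ha : ∀ j ∈ Finset.Icc (d + 1) (n - 1), ∀ k, 0 ≤ a j k) (y : ℕ → ℂ) (β : Fin d → ℂ) (m : ℕ)
    (p : Fin d → ℤ) {δ : Fin d → ℝ} {c C : ℝ} (hcos : ∀ k, c ≤ cos (π * δ k))
    (hC : ∀ x, 0 ≤ x →
      ∑ j ∈ Finset.Icc (d + 1) (n - 1), ‖y j‖ * x ^ ((∑ k, a j k : ℚ) : ℝ) ≤ C + c / 2 * x)
    {ρ : Fin d → ℝ} (hρ : ∀ k, 0 < ρ k) :
    gevreyCoeffIntegrand d n a y β m p δ ρ ≤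
      rexp (∑ k, (β k).im * (π * (1 + δ k + 2 * p k))) *
        (∏ k, ρ k ^ (-(β k).re + (m : ℝ) * (a n k : ℝ) - 1)) * rexp (C - c / 2 * ∑ k, ρ k) := by
  refine (gevreyCoeffIntegrand_le ha y β m p δ hρ).trans ?_
  gcongr
  case ha => exact mul_nonneg (exp_pos _).le (Finset.prod_nonneg fun k _ => rpow_nonneg (hρ k).le _)
  have hsublinear := hC (∑ k, ρ k) (Finset.sum_nonneg fun k _ => (hρ k).le)
  have hlinear : c * ∑ k, ρ k ≤ ∑ k, ρ k * cos (π * δ k) := by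
    rw [Finset.mul_sum]
    exact Finset.sum_le_sum fun k _ => by
      rw [mul_comm]; exact mul_le_mul_of_nonneg_left (hcos k) (hρ k).le
  linarith

theorem gevrey_coeff_integrand_dominated_general (d n : ℕ) (hdn : d + 1 ≤ n)
    (a : ℕ → Fin d → ℚ)
    (hpos : ∀ j, d + 1 ≤ j → j ≤ n → ∀ k, 0 < a j k)
    (hsum : ∀ j, d + 1 ≤ j → j ≤ n - 1 → (∑ k, a j k) < 1)
    (y : ℕ → ℂ) (β : Fin d → ℂ) (hβ : ∀ k, (β k).re < 0) (m : ℕ)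
    (p : Fin d → ℤ) (δ : Fin d → ℝ) (hδ : ∀ k, |δ k| < 1 / 2) :
    (∃ K C c : ℝ, 0 < c ∧
      ∀ ρ : Fin d → ℝ, (∀ k, 0 < ρ k) →
        gevreyCoeffIntegrand d n a y β m p δ ρ ≤
          K * (∏ k, ρ k ^ (-(β k).re + (m : ℝ) * (a n k : ℝ) - 1)) *
            Real.exp (C - c * ∑ k, ρ k)) ∧
    IntegrableOn (gevreyCoeffIntegrand d n a y β m p δ)
      {ρ : Fin d → ℝ | ∀ k, 0 < ρ k} volume := by
  have ha : ∀ j ∈ Finset.Icc (d + 1) (n - 1), ∀ k, 0 ≤ a j k := fun j hj k =>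
    (hpos j (Finset.mem_Icc.1 hj).1 ((Finset.mem_Icc.1 hj).2.trans (n.sub_le 1)) k).le
  obtain ⟨c, hc, hcle⟩ := exists_pos_forall_le fun k => cos_pos_of_mem_Ioo (x := π * δ k) <| by
    obtain ⟨h₁, h₂⟩ := abs_lt.1 (hδ k)
    constructor <;> nlinarith [pi_pos]
  obtain ⟨C, hC⟩ := exists_sum_mul_rpow_le_add_mul (Finset.Icc (d + 1) (n - 1)) (‖y ·‖)
    (fun j => ((∑ k, a j k : ℚ) : ℝ)) (fun _ _ => norm_nonneg _)
    (fun j hj => ⟨by exact_mod_cast Finset.sum_nonneg fun k _ => ha j hj k,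
      by exact_mod_cast hsum j (Finset.mem_Icc.1 hj).1 (Finset.mem_Icc.1 hj).2⟩) (half_pos hc)
  have he : ∀ k, -1 < -(β k).re + (m : ℝ) * (a n k : ℝ) - 1 := fun k => by
    have : (0 : ℝ) ≤ m * a n k :=
      mul_nonneg m.cast_nonneg (by exact_mod_cast (hpos n hdn le_rfl k).le)
    linarith [hβ k]
  have hbound := fun (ρ : Fin d → ℝ) (hρ : ∀ k, 0 < ρ k) =>
    gevreyCoeffIntegrand_le_exp_sub ha y β m p hcle hC hρ
  exact ⟨⟨_, C, c / 2, half_pos hc, hbound⟩, integrableOn_of_norm_le_prod_rpow_mul_exp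
    (by unfold gevreyCoeffIntegrand; fun_prop) he (half_pos hc) fun ρ hρ =>
      (norm_of_nonneg (mul_nonneg (norm_nonneg _) (norm_nonneg _))).trans_le (hbound ρ hρ)⟩

/-- Under Assumption (4.4)(1) (the columns `a(d+1),…,a(n-1)` lie in the open positive orthant
with coordinate sum `< 1`, and `a(n)` has positive coordinates), for `Re β < 0` the integrand of
`A_{p,δ}(β;m,y')` is dominated on the half-line cycle by
`Const · ρ^{-Re β + m a(n) - 𝟙} exp(C - c(ρ_1+⋯+ρ_d))` and hence is integrable on `(0,∞)^d`. -/
theorem gevrey_coeff_integrand_dominated (d n : ℕ) (hd : 1 ≤ d) (hdn : d + 1 ≤ n)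
    (a : ℕ → Fin d → ℚ)
    (hpos : ∀ j, d + 1 ≤ j → j ≤ n → ∀ k, 0 < a j k)
    (hsum : ∀ j, d + 1 ≤ j → j ≤ n - 1 → (∑ k, a j k) < 1)
    (y : ℕ → ℂ) (β : Fin d → ℂ) (hβ : ∀ k, (β k).re < 0) (m : ℕ)
    (p : Fin d → ℤ) (δ : Fin d → ℝ) (hδ : ∀ k, |δ k| < 1 / 2) :
    (∃ K C c : ℝ, 0 < c ∧
      ∀ ρ : Fin d → ℝ, (∀ k, 0 < ρ k) →
        gevreyCoeffIntegrand d n a y β m p δ ρ ≤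
          K * (∏ k, ρ k ^ (-(β k).re + (m : ℝ) * (a n k : ℝ) - 1)) *
            Real.exp (C - c * ∑ k, ρ k)) ∧
    IntegrableOn (gevreyCoeffIntegrand d n a y β m p δ)
      {ρ : Fin d → ℝ | ∀ k, 0 < ρ k} volume :=
  gevrey_coeff_integrand_dominated_general d n hdn a hpos hsum y β hβ m p δ hδ
end

section
/- Let a ∈ ℚ^d_{>0} with |a| = a_1+⋯+a_d > 1 and fix y_n ∈ ℂ*. For any p ∈ ℤ^d there exists δ ∈ ℝ^d with |δ_k| < 1/2 for all k such that arg(y_n) + ⟨𝟙 + δ + 2p, a⟩π ∈ (π/2, 3π/2) + 2πℤ. -/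
/-!
Take all `δ_k` equal to one real `t`. Then the angle is `c + t |a| π` for a fixed `c`, so as `t`
ranges over `(-1/2, 1/2)` it sweeps the open interval of radius `|a| π / 2 > π / 2` about `c`.
The complement of `(π/2, 3π/2) + 2πℤ` consists of closed intervals of length `π`, none of which
can contain such an interval.
-/

open Real Finset

lemma exists_int_abs_sub_odd_mul_pi_le (x : ℝ) : ∃ L : ℤ, |x - (π + 2 * π * L)| ≤ π := by
  set L := round ((x - π) / (2 * π))
  have hscale : x - (π + 2 * π * L) = 2 * π * ((x - π) / (2 * π) - L) := by
    field_simp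
    ring
  refine ⟨L, ?_⟩
  rw [hscale, abs_mul, abs_of_pos (by positivity)]
  nlinarith [abs_sub_round ((x - π) / (2 * π)), pi_pos]

lemma exists_abs_sub_lt_mem_Ioo_add_two_pi_mul {x r : ℝ} (hr : π / 2 < r) :
    ∃ y, |y - x| < r ∧ ∃ L : ℤ, y ∈ Set.Ioo (π / 2 + 2 * π * L) (3 * π / 2 + 2 * π * L) := by
  obtain ⟨L, hL⟩ := exists_int_abs_sub_odd_mul_pi_le x
  obtain ⟨y, hxy, hym⟩ := exists_dist_lt_lt (x := x) (z := π + 2 * π * L) (δ := r)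
    (by linarith [pi_pos]) (half_pos pi_pos) (by rw [Real.dist_eq]; linarith)
  rw [Real.dist_eq, abs_lt] at hym
  refine ⟨y, by rwa [abs_sub_comm, ← Real.dist_eq], L, ?_, ?_⟩ <;> linarith [hym.1, hym.2]

lemma sum_add_const_mul {ι : Type*} (s : Finset ι) (u a : ι → ℝ) (t : ℝ) :
    ∑ k ∈ s, (u k + t) * a k = ∑ k ∈ s, u k * a k + t * ∑ k ∈ s, a k := by
  simp only [add_mul, sum_add_distrib, mul_sum]

theorem exists_admissible_delta_general (d : ℕ) (a : Fin d → ℚ)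
    (hsum : 1 < ∑ k, a k) (α : ℝ) (p : Fin d → ℤ) :
    ∃ δ : Fin d → ℝ, (∀ k, |δ k| < 1 / 2) ∧
      ∃ L : ℤ, α + (∑ k, (1 + δ k + 2 * (p k : ℝ)) * (a k : ℝ)) * Real.pi ∈
        Set.Ioo (Real.pi / 2 + 2 * Real.pi * L) (3 * Real.pi / 2 + 2 * Real.pi * L) := by
  set S : ℝ := ∑ k, (a k : ℝ)
  have hS : 1 < S := by simpa [S] using (Rat.cast_lt (K := ℝ)).mpr hsum
  have hSπ : 0 < S * π := mul_pos (by linarith) pi_pos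
  set c := α + (∑ k, (1 + 2 * (p k : ℝ)) * a k) * π
  obtain ⟨y, hyc, L, hy⟩ := exists_abs_sub_lt_mem_Ioo_add_two_pi_mul (x := c) (r := S * π / 2)
    (by nlinarith [pi_pos])
  set t := (y - c) / (S * π)
  have ht : |t| < 1 / 2 := by
    rw [abs_div, abs_of_pos hSπ, div_lt_iff₀ hSπ]; linarith
  have hangle : α + (∑ k, (1 + t + 2 * (p k : ℝ)) * a k) * π = y := by
    have hty : t * (S * π) = y - c := div_mul_cancel₀ _ hSπ.ne'
    simp only [add_right_comm _ t _]
    rw [sum_add_const_mul]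
    linear_combination hty
  exact ⟨fun _ => t, fun _ => ht, L, hangle ▸ hy⟩

/-- Existence of an admissible `δ` (Lemma 4.5): if `a ∈ ℚ^d_{>0}` has `|a| > 1`, then for
any determination `α` of `arg y_n` and any `p ∈ ℤ^d` there is `δ` with `|δ_k| < 1/2` such
that `α + ⟨𝟙+δ+2p, a⟩π ∈ (π/2, 3π/2) + 2πℤ`. -/
theorem exists_admissible_delta (d : ℕ) (a : Fin d → ℚ) (hapos : ∀ k, 0 < a k)
    (hsum : 1 < ∑ k, a k) (α : ℝ) (p : Fin d → ℤ) :
    ∃ δ : Fin d → ℝ, (∀ k, |δ k| < 1 / 2) ∧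
      ∃ L : ℤ, α + (∑ k, (1 + δ k + 2 * (p k : ℝ)) * (a k : ℝ)) * Real.pi ∈
        Set.Ioo (Real.pi / 2 + 2 * Real.pi * L) (3 * Real.pi / 2 + 2 * Real.pi * L) :=
  exists_admissible_delta_general d a hsum α p
end

section
/- Let h : U → ℂ and Σ ⊂ U with the property: there exists δ ∈ (0, π/2) such that for all R > 0 there is a compact K ⊂ U with Re h(t) < -R and arg h(t) ∈ (π - δ, π + δ) for all t ∈ Σ \ K. Let P be a point of a normal crossing compactifying divisor adherent to Σ, with local coordinates v in which h(v) = w(v)/(v_1^{m_1}⋯v_k^{m_k}), m_i > 0, and |w(v)| ≥ R' > 0 near P. Then for v near P on Σ, |exp(h(v))| ≤ exp(-R' cos(δ) / (|v_1|^{m_1}⋯|v_k|^{m_k})); in particular exp(h) is flat at P: for every N ∈ ℕ^k there is C_N with |exp(h(v))| ≤ C_N |v_1|^{N_1}⋯|v_k|^{N_k}. -/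
/-!
If `h = w / v^m` with `|w| ≥ R'` and `-h` stays in the sector `|arg| < δ`, then
`Re h ≤ -|h| cos δ ≤ -R' cos δ / |v|^m`, which is the first estimate. Flatness follows because
`exp (-c / x) ≤ M! / c^M · x^M` for every `M` (compare with one term of the series of `exp (c / x)`),
and, when all `|v_i| ≤ 1` and all `m_i ≥ 1`, `|v|^m ≤ |v_j|` for each `j`, so
`(|v|^m)^(∑ N_i) ≤ ∏ |v_i|^{N_i}`.
-/

open Finset
open scoped Nat

namespace Complex

theorem re_le_neg_norm_mul_cos_of_abs_arg_neg_le {z : ℂ} {δ : ℝ} (hδ : δ ≤ Real.pi)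
    (harg : |arg (-z)| ≤ δ) : z.re ≤ -(‖z‖ * Real.cos δ) := by
  have hcos : Real.cos δ ≤ Real.cos (arg (-z)) := by
    rw [← Real.cos_abs (arg (-z))]
    exact Real.cos_le_cos_of_nonneg_of_le_pi (abs_nonneg _) hδ harg
  have hre : (-z).re = ‖z‖ * Real.cos (arg (-z)) := by
    rw [← norm_neg z, norm_mul_cos_arg]
  have := mul_le_mul_of_nonneg_left hcos (norm_nonneg z)
  rw [neg_re] at hre
  linarith

theorem norm_exp_le_of_abs_arg_neg_le {z : ℂ} {r δ : ℝ} (hδ : δ ≤ Real.pi / 2)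
    (hr : r ≤ ‖z‖) (harg : |arg (-z)| ≤ δ) : ‖exp z‖ ≤ Real.exp (-(r * Real.cos δ)) := by
  have hcos : 0 ≤ Real.cos δ := Real.cos_nonneg_of_neg_pi_div_two_le_of_le
    (by linarith [Real.pi_pos, (abs_nonneg _).trans harg]) hδ
  rw [norm_exp, Real.exp_le_exp]
  have := re_le_neg_norm_mul_cos_of_abs_arg_neg_le (by linarith [Real.pi_pos]) harg
  nlinarith [mul_le_mul_of_nonneg_right hr hcos]

end Complex

namespace Real

theorem exp_neg_div_le_factorial_div_pow_mul_pow {c x : ℝ} (hc : 0 < c) (hx : 0 < x) (M : ℕ) :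
    exp (-c / x) ≤ M ! / c ^ M * x ^ M := by
  have hpos : 0 < (c / x) ^ M / M ! := by positivity
  calc exp (-c / x) = (exp (c / x))⁻¹ := by rw [neg_div, exp_neg]
    _ ≤ ((c / x) ^ M / M !)⁻¹ := inv_anti₀ hpos (pow_div_factorial_le_exp _ (by positivity) M)
    _ = M ! / c ^ M * x ^ M := by
      field_simp
      rw [← mul_pow, div_mul_cancel₀ c hx.ne']

end Real

namespace Finset

variable {ι : Type*} {s : Finset ι} {f : ι → ℝ} {m : ι → ℕ}

theorem prod_pow_le_of_le_one (hf₀ : ∀ i ∈ s, 0 ≤ f i) (hf₁ : ∀ i ∈ s, f i ≤ 1)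
    {j : ι} (hj : j ∈ s) (hmj : 1 ≤ m j) : ∏ i ∈ s, f i ^ m i ≤ f j := by
  classical
  rw [← mul_prod_erase s _ hj]
  calc f j ^ m j * ∏ i ∈ s.erase j, f i ^ m i ≤ f j ^ m j * 1 := by
        gcongr
        · exact pow_nonneg (hf₀ j hj) _
        · exact prod_le_one (fun i hi => pow_nonneg (hf₀ i (mem_of_mem_erase hi)) _)
            (fun i hi => pow_le_one₀ (hf₀ i (mem_of_mem_erase hi)) (hf₁ i (mem_of_mem_erase hi)))
    _ ≤ f j := by
        rw [mul_one]
        exact pow_le_of_le_one (hf₀ j hj) (hf₁ j hj) (by omega)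

theorem prod_pow_pow_sum_le_prod_pow (hf₀ : ∀ i ∈ s, 0 ≤ f i) (hf₁ : ∀ i ∈ s, f i ≤ 1)
    (hm : ∀ i ∈ s, 1 ≤ m i) (N : ι → ℕ) :
    (∏ i ∈ s, f i ^ m i) ^ (∑ i ∈ s, N i) ≤ ∏ i ∈ s, f i ^ N i := by
  rw [← prod_pow_eq_pow_sum]
  exact prod_le_prod (fun i _ => pow_nonneg (prod_nonneg fun j hj => pow_nonneg (hf₀ j hj) _) _)
    fun i hi => pow_le_pow_left₀ (prod_nonneg fun j hj => pow_nonneg (hf₀ j hj) _)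
      (prod_pow_le_of_le_one hf₀ hf₁ hi (hm i hi)) _

end Finset

theorem rapid_decay_flatness_general (d k : ℕ)
    (S : Set (Fin d → ℂ)) (h w : (Fin d → ℂ) → ℂ)
    (m : Fin d → ℕ) (hm : ∀ i : Fin d, (i : ℕ) < k → 0 < m i)
    (R' δ : ℝ) (hR' : 0 < R') (hδ : δ ∈ Set.Ioo 0 (Real.pi / 2))
    (hform : ∀ v ∈ S, (∀ i : Fin d, (i : ℕ) < k → v i ≠ 0) ∧
      h v = w v / ∏ i ∈ Finset.univ.filter (fun i : Fin d => (i : ℕ) < k), v i ^ m i)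
    (hw : ∀ v ∈ S, R' ≤ ‖w v‖)
    (harg : ∀ v ∈ S, |Complex.arg (-(h v))| < δ) :
    (∀ v ∈ S, ‖Complex.exp (h v)‖ ≤
      Real.exp (-(R' * Real.cos δ) /
        ∏ i ∈ Finset.univ.filter (fun i : Fin d => (i : ℕ) < k), ‖v i‖ ^ m i)) ∧
    (∀ N : Fin d → ℕ, ∃ C : ℝ, 0 < C ∧ ∀ v ∈ S, (∀ i, ‖v i‖ ≤ 1) →
      ‖Complex.exp (h v)‖ ≤
        C * ∏ i ∈ Finset.univ.filter (fun i : Fin d => (i : ℕ) < k),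
          ‖v i‖ ^ N i) := by
  set F := univ.filter (fun i : Fin d => (i : ℕ) < k)
  have hc : 0 < R' * Real.cos δ :=
    mul_pos hR' (Real.cos_pos_of_mem_Ioo ⟨by linarith [Real.pi_pos, hδ.1], hδ.2⟩)
  have hP : ∀ v ∈ S, 0 < ∏ i ∈ F, ‖v i‖ ^ m i := fun v hv =>
    prod_pos fun i hi => pow_pos (norm_pos_iff.2 ((hform v hv).1 i (mem_filter.1 hi).2)) _
  have decay : ∀ v ∈ S, ‖Complex.exp (h v)‖ ≤
      Real.exp (-(R' * Real.cos δ) / ∏ i ∈ F, ‖v i‖ ^ m i) := fun v hv => by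
    have hnorm : R' / ∏ i ∈ F, ‖v i‖ ^ m i ≤ ‖h v‖ := by
      rw [(hform v hv).2, norm_div, norm_prod]
      simp only [norm_pow]
      exact div_le_div_of_nonneg_right (hw v hv) (hP v hv).le
    simpa only [div_mul_eq_mul_div, neg_div] using
      Complex.norm_exp_le_of_abs_arg_neg_le hδ.2.le hnorm (harg v hv).le
  refine ⟨decay, fun N => ⟨(∑ i ∈ F, N i)! / (R' * Real.cos δ) ^ ∑ i ∈ F, N i, by positivity,
    fun v hv hv₁ => ?_⟩⟩
  calc ‖Complex.exp (h v)‖ ≤ _ := decay v hv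
    _ ≤ _ := Real.exp_neg_div_le_factorial_div_pow_mul_pow hc (hP v hv) _
    _ ≤ _ := by
      gcongr
      exact prod_pow_pow_sum_le_prod_pow (fun i _ => norm_nonneg _) (fun i _ => hv₁ i)
        (fun i hi => hm i (mem_filter.1 hi).2) N

/-- The core estimate of Lemma 5.1: near a point of the normal crossing divisor where
`h(v) = w(v)/(v_1^{m_1}⋯v_k^{m_k})` with `m_i > 0` and `|w(v)| ≥ R' > 0`, the controlled
argument condition `arg h(v) ∈ (π-δ, π+δ)` (i.e. `|arg(-h(v))| < δ`) gives
`|exp(h(v))| ≤ exp(-R' cos δ / (|v_1|^{m_1}⋯|v_k|^{m_k}))`; in particular `exp(h)` is flat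
along the divisor. -/
theorem rapid_decay_flatness (d k : ℕ) (hk : k ≤ d)
    (S : Set (Fin d → ℂ)) (h w : (Fin d → ℂ) → ℂ)
    (m : Fin d → ℕ) (hm : ∀ i : Fin d, (i : ℕ) < k → 0 < m i)
    (R' δ : ℝ) (hR' : 0 < R') (hδ : δ ∈ Set.Ioo 0 (Real.pi / 2))
    (hform : ∀ v ∈ S, (∀ i : Fin d, (i : ℕ) < k → v i ≠ 0) ∧
      h v = w v / ∏ i ∈ Finset.univ.filter (fun i : Fin d => (i : ℕ) < k), v i ^ m i)
    (hw : ∀ v ∈ S, R' ≤ ‖w v‖)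
    (harg : ∀ v ∈ S, |Complex.arg (-(h v))| < δ) :
    (∀ v ∈ S, ‖Complex.exp (h v)‖ ≤
      Real.exp (-(R' * Real.cos δ) /
        ∏ i ∈ Finset.univ.filter (fun i : Fin d => (i : ℕ) < k), ‖v i‖ ^ m i)) ∧
    (∀ N : Fin d → ℕ, ∃ C : ℝ, 0 < C ∧ ∀ v ∈ S, (∀ i, ‖v i‖ ≤ 1) →
      ‖Complex.exp (h v)‖ ≤
        C * ∏ i ∈ Finset.univ.filter (fun i : Fin d => (i : ℕ) < k),
          ‖v i‖ ^ N i) :=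
  rapid_decay_flatness_general d k S h w m hm R' δ hR' hδ hform hw harg
end
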